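/- arXiv:math/0209103 — 3 statements merged into one kernel-verified Lean document; each statement's English description precedes it below -/
import Mathlib

section
/- Let p be a prime and let A be an invertible n×n matrix over the p-adic integers ℤ_p. Then there exists a vector v = (v_1,...,v_n) ∈ ℤ_p^n such that each component v_i is the square of a p-adic unit and every component of the vector A·v lies in the subring ℤ_(p) ⊆ ℤ_p of rational numbers with denominator prime to p. -/
/-!
Let `c = A · 𝟙` and let `a ∈ ℤⁿ` agree with `c` modulo `p³`. Then `v = A⁻¹ a` has `A v = a`
integral and `v - 𝟙 = A⁻¹ (a - c) ≡ 0 mod p³`. Each `vᵢ` is therefore so close to `1` that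
Hensel's lemma, applied to `X² - vᵢ` at `1`, makes it the square of a unit; `p³` is the exponent
that works uniformly, including `p = 2`, because `p³ ∤ 4`.
-/

open Matrix

namespace PadicInt

variable {p : ℕ} [Fact p.Prime]

theorem isUnit_of_norm_sub_one_lt_one {z : ℤ_[p]} (hz : ‖z - 1‖ < 1) : IsUnit z := by
  rw [isUnit_iff, ← sub_add_cancel z 1,
    IsUltrametricDist.norm_add_eq_max_of_norm_ne_norm (by rw [norm_one]; exact hz.ne),
    norm_one, max_eq_right hz.le]

theorem exists_unit_sq_of_norm_sub_one_lt {x : ℤ_[p]} (hx : ‖x - 1‖ < ‖(2 : ℤ_[p])‖ ^ 2) :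
    ∃ u : ℤ_[p]ˣ, x = u ^ 2 := by
  set F : Polynomial ℤ_[p] := .X ^ 2 - .C x
  have hF : F.aeval (1 : ℤ_[p]) = 1 - x := by simp [F]
  have hF' : F.derivative.aeval (1 : ℤ_[p]) = 2 := by simp [F, one_add_one_eq_two]
  obtain ⟨z, hz, hz1, -⟩ :=
    hensels_lemma (F := F) (a := 1) (by rwa [hF, hF', norm_sub_rev])
  have hzx : z ^ 2 = x := sub_eq_zero.mp (by simpa [F] using hz)
  have hz_unit : IsUnit z :=
    isUnit_of_norm_sub_one_lt_one ((hF' ▸ hz1).trans_le (norm_le_one 2))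
  exact ⟨hz_unit.unit, by rw [IsUnit.unit_spec, hzx]⟩

theorem pow_neg_three_lt_norm_two_sq : (p : ℝ) ^ (-3 : ℤ) < ‖(2 : ℤ_[p])‖ ^ 2 := by
  have hp := (Fact.out : p.Prime).two_le
  have h_not_dvd : ¬ (p ^ 3 : ℤ) ∣ 4 := fun h => by
    have h8 : (2 : ℤ) ^ 3 ≤ (p : ℤ) ^ 3 := pow_le_pow_left₀ (by norm_num) (by exact_mod_cast hp) 3
    linarith [Int.le_of_dvd (by norm_num) h]
  rw [← norm_pow, show (2 : ℤ_[p]) ^ 2 = ((4 : ℤ) : ℤ_[p]) by norm_num]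
  exact lt_of_not_ge (mt norm_int_le_pow_iff_dvd.mp h_not_dvd)

theorem exists_unit_sq_of_sub_one_mem_span_pow_three {x : ℤ_[p]}
    (hx : x - 1 ∈ Ideal.span {(p : ℤ_[p]) ^ 3}) : ∃ u : ℤ_[p]ˣ, x = u ^ 2 :=
  exists_unit_sq_of_norm_sub_one_lt
    (((norm_le_pow_iff_mem_span_pow _ 3).mpr hx).trans_lt pow_neg_three_lt_norm_two_sq)

end PadicInt

theorem Matrix.mulVec_apply_mem_ideal {R m n : Type*} [CommRing R] [Fintype n]
    (M : Matrix m n R) {I : Ideal R} {w : n → R} (hw : ∀ j, w j ∈ I) (i : m) :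
    (M *ᵥ w) i ∈ I :=
  Ideal.sum_mem _ fun j _ => I.mul_mem_left _ (hw j)

/-- For an invertible `n × n` matrix `A` over `ℤ_[p]` there is a vector `v` all of whose
components are squares of `p`-adic units such that every component of `A · v` lies in
`ℤ_(p) ⊆ ℤ_[p]`, i.e. is a rational with denominator prime to `p`. -/
theorem stmt_2 (p : ℕ) [Fact p.Prime] (n : ℕ) (A : Matrix (Fin n) (Fin n) ℤ_[p])
    (hA : IsUnit A) :
    ∃ v : Fin n → ℤ_[p],
      (∀ i, ∃ u : ℤ_[p]ˣ, v i = (u : ℤ_[p]) ^ 2) ∧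
      (∀ i, ∃ a b : ℤ, ¬ (p : ℤ) ∣ b ∧ (b : ℤ_[p]) * A.mulVec v i = (a : ℤ_[p])) := by
  have hdet := A.isUnit_iff_isUnit_det.mp hA
  set c := A *ᵥ fun _ => 1
  set a : Fin n → ℤ_[p] := fun j => ((c j).appr 3 : ℤ_[p])
  have hAv : A *ᵥ (A⁻¹ *ᵥ a) = a := by
    rw [mulVec_mulVec, A.mul_nonsing_inv hdet, one_mulVec]
  have hv_sub_one : A⁻¹ *ᵥ a - (fun _ => 1) = A⁻¹ *ᵥ (a - c) := by
    rw [mulVec_sub, mulVec_mulVec, A.nonsing_inv_mul hdet, one_mulVec]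
  refine ⟨A⁻¹ *ᵥ a, fun i => ?_, fun i => ⟨(c i).appr 3, 1, ?_, ?_⟩⟩
  · refine PadicInt.exists_unit_sq_of_sub_one_mem_span_pow_three ?_
    rw [show (A⁻¹ *ᵥ a) i - 1 = (A⁻¹ *ᵥ (a - c)) i from congrFun hv_sub_one i]
    refine mulVec_apply_mem_ideal _ (fun j => ?_) i
    simpa [a] using neg_mem (PadicInt.appr_spec 3 (c j))
  · exact_mod_cast (Fact.out : p.Prime).not_dvd_one
  · rw [hAv]
    simp [a]
end

section
/- Let W = D_8 act on ℤ_2^2 by the standard reflection representation (generated by diag(-1,1), diag(1,-1), and the coordinate swap). Let L' = {(a,b) ∈ ℤ_2^2 : a + b ∈ 2ℤ_2}. Then L' is a W-invariant ℤ_2-sublattice of ℤ_2^2 of index 2, and L' is not isomorphic to ℤ_2^2 as a ℤ_2[W]-module. -/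
/-- The generators `diag(-1,1)`, `diag(1,-1)` and the coordinate swap of the standard
reflection action of `D_8` on `ℤ_[2]²`. -/
def D8gens : Set (Matrix (Fin 2) (Fin 2) ℤ_[2]) :=
  {!![-1, 0; 0, 1], !![1, 0; 0, -1], !![0, 1; 1, 0]}

/-- The sublattice `L' = {(a,b) ∈ ℤ_[2]² : a + b ∈ 2ℤ_[2]}` (the `Spin(5)` lattice). -/
noncomputable def Lspin : Submodule ℤ_[2] (Fin 2 → ℤ_[2]) :=
  Submodule.comap
    ((LinearMap.proj 0 : (Fin 2 → ℤ_[2]) →ₗ[ℤ_[2]] ℤ_[2]) + LinearMap.proj 1)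
    (Ideal.span {(2 : ℤ_[2])})

lemma dvd_iff_toZMod (t : ℤ_[2]) : (2 : ℤ_[2]) ∣ t ↔ PadicInt.toZMod t = 0 := by
  have h2 : ((2 : ℕ) : ℤ_[2]) = 2 := by norm_num
  rw [← Ideal.mem_span_singleton, ← h2, ← PadicInt.maximalIdeal_eq_span_p,
    ← PadicInt.ker_toZMod, RingHom.mem_ker]

lemma mem_Lspin_iff (x : Fin 2 → ℤ_[2]) :
    x ∈ Lspin ↔ (2 : ℤ_[2]) ∣ x 0 + x 1 := by
  simp [Lspin, Submodule.mem_comap, Ideal.mem_span_singleton]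

lemma not_two_dvd_one : ¬ (2 : ℤ_[2]) ∣ 1 := by
  rw [dvd_iff_toZMod, map_one]
  decide

/-- `L'` is a `D_8`-invariant sublattice of `ℤ_[2]²` of index 2, and it is not isomorphic
to `ℤ_[2]²` as a `ℤ_[2][D_8]`-module, i.e. there is no `ℤ_[2]`-linear bijection
`L' ≃ ℤ_[2]²` commuting with the `D_8`-action. -/
theorem stmt_10 :
    (∀ g ∈ D8gens, ∀ x, x ∈ Lspin → g.mulVec x ∈ Lspin) ∧
    Lspin.toAddSubgroup.index = 2 ∧
    ¬ ∃ f : Lspin ≃ₗ[ℤ_[2]] (Fin 2 → ℤ_[2]),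
        ∀ g ∈ D8gens, ∀ x y : Lspin,
          (y : Fin 2 → ℤ_[2]) = g.mulVec (x : Fin 2 → ℤ_[2]) →
            (f y : Fin 2 → ℤ_[2]) = g.mulVec (f x) := by
  have hinv : ∀ g ∈ D8gens, ∀ x, x ∈ Lspin → g.mulVec x ∈ Lspin := by
    rintro g (rfl | rfl | rfl) x hx <;>
      rw [mem_Lspin_iff] at hx ⊢ <;> obtain ⟨c, hc⟩ := hx <;>
      simp [Matrix.mulVec, dotProduct, Fin.sum_univ_two]
    · exact ⟨c - x 0, by linear_combination hc⟩
    · exact ⟨c - x 1, by linear_combination hc⟩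
    · exact ⟨c, by linear_combination hc⟩
  refine ⟨hinv, ?_, ?_⟩
  · rw [AddSubgroup.index_eq_two_iff]
    refine ⟨![1, 0], fun b => ?_⟩
    simp only [Submodule.mem_toAddSubgroup, mem_Lspin_iff, Pi.add_apply,
      Matrix.cons_val_zero, Matrix.cons_val_one, Matrix.head_cons, add_zero]
    have hrw : b 0 + 1 + b 1 = (b 0 + b 1) + 1 := by ring
    rw [hrw, dvd_iff_toZMod, dvd_iff_toZMod, map_add, map_one]
    generalize PadicInt.toZMod (b 0 + b 1) = z
    revert z; decide
  · rintro ⟨f, hf⟩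
    -- equivariance of `f.symm`
    have key : ∀ g ∈ D8gens, ∀ u : Fin 2 → ℤ_[2],
        ((f.symm (g.mulVec u) : Lspin) : Fin 2 → ℤ_[2])
          = g.mulVec ((f.symm u : Lspin) : Fin 2 → ℤ_[2]) := by
      intro g hg u
      have hx : g.mulVec ((f.symm u : Lspin) : Fin 2 → ℤ_[2]) ∈ Lspin :=
        hinv g hg _ (f.symm u).2
      have h1 := hf g hg (f.symm u) ⟨_, hx⟩ rfl
      rw [f.apply_symm_apply] at h1
      have h2 : f.symm (g.mulVec u) = ⟨_, hx⟩ := by rw [← h1, f.symm_apply_apply]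
      rw [h2]
    have hg1 : (!![-1, 0; 0, 1] : Matrix (Fin 2) (Fin 2) ℤ_[2]) ∈ D8gens := by
      left; rfl
    have hg3 : (!![0, 1; 1, 0] : Matrix (Fin 2) (Fin 2) ℤ_[2]) ∈ D8gens := by
      right; right; rfl
    set a : Fin 2 → ℤ_[2] := ((f.symm ![1, 0] : Lspin) : Fin 2 → ℤ_[2]) with ha
    set b : Fin 2 → ℤ_[2] := ((f.symm ![0, 1] : Lspin) : Fin 2 → ℤ_[2]) with hb
    -- a 1 = 0
    have ha1 : a 1 = 0 := by
      have hme : (!![-1, 0; 0, 1] : Matrix (Fin 2) (Fin 2) ℤ_[2]).mulVec ![1, 0]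
          = -![1, 0] := by
        funext i; fin_cases i <;>
          simp [Matrix.mulVec, dotProduct, Fin.sum_univ_two]
      have h := key _ hg1 ![1, 0]
      have hneg : f.symm (-(![1, 0] : Fin 2 → ℤ_[2])) = -(f.symm ![1, 0]) :=
        f.symm.toLinearMap.map_neg _
      rw [hme, hneg] at h
      have h1 := congrFun h 1
      simp [Matrix.mulVec, dotProduct, Fin.sum_univ_two, ← ha] at h1
      have h2 : (2 : ℤ_[2]) * a 1 = 0 := by linear_combination - h1
      rcases mul_eq_zero.1 h2 with h | h
      · exact absurd h two_ne_zero
      · exact h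
    -- b = swap of a
    have hswap : b = ![a 1, a 0] := by
      have hme : (!![0, 1; 1, 0] : Matrix (Fin 2) (Fin 2) ℤ_[2]).mulVec ![1, 0]
          = ![0, 1] := by
        funext i; fin_cases i <;>
          simp [Matrix.mulVec, dotProduct, Fin.sum_univ_two]
      have h := key _ hg3 ![1, 0]
      rw [hme] at h
      rw [hb, h, ← ha]
      funext i; fin_cases i <;>
        simp [Matrix.mulVec, dotProduct, Fin.sum_univ_two]
    -- a 0 is divisible by 2
    have hamem : (2 : ℤ_[2]) ∣ a 0 := by
      have h := (mem_Lspin_iff a).1 (by rw [ha]; exact (f.symm ![1, 0]).2)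
      rwa [ha1, add_zero] at h
    -- the vector (1,1) lies in Lspin
    have hv : (![1, 1] : Fin 2 → ℤ_[2]) ∈ Lspin := by
      rw [mem_Lspin_iff]
      exact ⟨1, by norm_num⟩
    set v : Lspin := ⟨![1, 1], hv⟩ with hvdef
    set u : Fin 2 → ℤ_[2] := f v with hu
    have hsymm : f.symm u = v := by rw [hu, f.symm_apply_apply]
    -- decompose u
    have hdecomp : u = u 0 • ![1, 0] + u 1 • ![0, 1] := by
      funext i; fin_cases i <;> simp
    have hφ : (v : Fin 2 → ℤ_[2]) = u 0 • a + u 1 • b := by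
      have hst : f.symm u = u 0 • f.symm ![1, 0] + u 1 • f.symm ![0, 1] := by
        conv_lhs => rw [hdecomp]
        have hadd : ∀ p q : Fin 2 → ℤ_[2], f.symm (p + q) = f.symm p + f.symm q :=
          f.symm.toLinearMap.map_add
        have hsmul : ∀ (c : ℤ_[2]) (p : Fin 2 → ℤ_[2]), f.symm (c • p) = c • f.symm p :=
          fun c p => f.symm.toLinearMap.map_smul c p
        rw [hadd, hsmul, hsmul]
      rw [← hsymm, hst]
      push_cast
      rw [← ha, ← hb]
    have h0 := congrFun hφ 0
    simp only [hvdef, hswap, ha1, Pi.add_apply, Pi.smul_apply, smul_eq_mul,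
      Matrix.cons_val_zero] at h0
    obtain ⟨μ, hμ⟩ := hamem
    apply not_two_dvd_one
    exact ⟨u 0 * μ, by rw [h0, hμ]; ring⟩
end

section
/- Every matrix A ∈ GL(n, ℚ_p) can be written as a product A = B·R with B ∈ GL(n, ℤ_p) and R ∈ GL(n, ℚ). -/
/-!
Approximate `A⁻¹` by a rational matrix `M` so closely that every entry of `A M - 1` has norm
`< 1`. Then `A M` has entries in `ℤ_[p]` and reduces to the identity modulo `p`, so its
determinant is a `p`-adic unit and `A M ∈ GL(n, ℤ_[p])`; invertibility of `A M` also forces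
`M ∈ GL(n, ℚ)`, and `A = (A M) M⁻¹`.
-/

open IsLocalRing

namespace Matrix

variable {n : Type*} [Fintype n] [DecidableEq n]

theorem isUnit_of_isUnit_map {R S : Type*} [CommRing R] [CommRing S] (f : R →+* S)
    [IsLocalHom f] {M : Matrix n n R} (h : IsUnit (M.map f)) : IsUnit M := by
  rw [isUnit_iff_isUnit_det, ← isUnit_map_iff f, RingHom.map_det]
  exact (isUnit_iff_isUnit_det _).mp h

theorem isUnit_of_sub_one_mem_maximalIdeal {R : Type*} [CommRing R] [IsLocalRing R]
    {X : Matrix n n R} (hX : ∀ i j, (X - 1) i j ∈ maximalIdeal R) : IsUnit X := by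
  refine isUnit_of_isUnit_map (residue R) ?_
  have hres : (X - 1).map (residue R) = 0 := by
    ext i j
    exact (residue_eq_zero_iff _).mpr (hX i j)
  rw [← (residue R).mapMatrix_apply, map_sub, map_one, sub_eq_zero] at hres
  rw [← (residue R).mapMatrix_apply, hres]
  exact isUnit_one

end Matrix

namespace PadicInt

variable {p : ℕ} [Fact p.Prime] {n : Type*} [Fintype n] [DecidableEq n]

theorem exists_map_eq_of_norm_sub_one_lt {X : Matrix n n ℚ_[p]}
    (hX : ∀ i j, ‖(X - 1) i j‖ < 1) :
    ∃ B : GL n ℤ_[p], (B : Matrix n n ℤ_[p]).map (↑) = X := by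
  have hle : ∀ i j, ‖X i j‖ ≤ 1 := fun i j => by
    have h1 : ‖(1 : Matrix n n ℚ_[p]) i j‖ ≤ 1 := by
      rw [Matrix.one_apply]; split_ifs <;> simp
    simpa using (Padic.nonarchimedean ((X - 1) i j) ((1 : Matrix n n ℚ_[p]) i j)).trans
      (max_le (hX i j).le h1)
  set Y : Matrix n n ℤ_[p] := Matrix.of fun i j => ⟨X i j, hle i j⟩
  have hY : Y.map (↑) = X := rfl
  have hYsub : Coe.ringHom.mapMatrix (Y - 1) = X - 1 := by
    rw [map_sub, map_one]
    exact congrArg (· - 1) hY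
  have hYunit : IsUnit Y := Matrix.isUnit_of_sub_one_mem_maximalIdeal fun i j => by
    have h := hX i j
    rw [← hYsub] at h
    rwa [mem_maximalIdeal, mem_nonunits, norm_def]
  exact ⟨hYunit.unit, hY⟩

end PadicInt

namespace Padic

variable {p : ℕ} [Fact p.Prime] {n : Type*}

theorem denseRange_matrix_map_ratCast :
    DenseRange fun M : Matrix n n ℚ => M.map ((↑) : ℚ → ℚ_[p]) :=
  DenseRange.piMap fun _ => DenseRange.piMap fun _ => denseRange_ratCast p

theorem exists_rat_matrix_norm_mul_sub_one_lt [Fintype n] [DecidableEq n] (A : GL n ℚ_[p]) :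
    ∃ M : Matrix n n ℚ,
      ∀ i j, ‖((A : Matrix n n ℚ_[p]) * M.map ((↑) : ℚ → ℚ_[p]) - 1) i j‖ < 1 := by
  set U : Set (Matrix n n ℚ_[p]) := {N | ∀ i j, ‖((A : Matrix n n ℚ_[p]) * N - 1) i j‖ < 1}
  have hU : IsOpen U := by
    simp only [U, Set.ofPred_forall]
    exact isOpen_iInter_of_finite fun i => isOpen_iInter_of_finite fun j =>
      isOpen_lt (by fun_prop) continuous_const
  have hAinv : (↑A⁻¹ : Matrix n n ℚ_[p]) ∈ U := fun i j => by simp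
  exact denseRange_matrix_map_ratCast.exists_mem_open hU ⟨_, hAinv⟩

end Padic

/-- Every `A ∈ GL(n,ℚ_[p])` can be written as a product `A = B · R` with
`B ∈ GL(n,ℤ_[p])` and `R ∈ GL(n,ℚ)`, where `ℤ_[p]` and `ℚ` are embedded in `ℚ_[p]`
canonically. -/
theorem stmt_14 (p : ℕ) [Fact p.Prime] (n : ℕ) (A : GL (Fin n) ℚ_[p]) :
    ∃ (B : GL (Fin n) ℤ_[p]) (R : GL (Fin n) ℚ),
      (A : Matrix (Fin n) (Fin n) ℚ_[p]) =
        ((B : Matrix (Fin n) (Fin n) ℤ_[p]).map (fun x => (x : ℚ_[p]))) *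
          ((R : Matrix (Fin n) (Fin n) ℚ).map (fun q => (q : ℚ_[p]))) := by
  obtain ⟨M, hM⟩ := Padic.exists_rat_matrix_norm_mul_sub_one_lt A
  obtain ⟨B, hB⟩ := PadicInt.exists_map_eq_of_norm_sub_one_lt hM
  have hMmap : M.map ((↑) : ℚ → ℚ_[p]) = (↑A⁻¹ : Matrix (Fin n) (Fin n) ℚ_[p]) *
      (B : Matrix (Fin n) (Fin n) ℤ_[p]).map (↑) := by
    rw [hB, ← mul_assoc, ← Units.val_mul, inv_mul_cancel, Units.val_one, one_mul]
  have hMunit : IsUnit M := Matrix.isUnit_of_isUnit_map (Rat.castHom ℚ_[p]) <| by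
    change IsUnit (M.map ((↑) : ℚ → ℚ_[p]))
    rw [hMmap]
    exact A⁻¹.isUnit.mul (Matrix.GeneralLinearGroup.map PadicInt.Coe.ringHom B).isUnit
  have hMinv := Matrix.GeneralLinearGroup.coe_map_mul_map_inv (Rat.castHom ℚ_[p]) hMunit.unit
  rw [hMunit.unit_spec] at hMinv
  refine ⟨B, hMunit.unit⁻¹, ?_⟩
  rw [hB, Matrix.coe_units_inv, hMunit.unit_spec, mul_assoc]
  exact ((congrArg (_ * ·) hMinv).trans (mul_one _)).symm
end
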